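/- For N odd, any simultaneous eigenvector |Ψ⟩ of T, X_glob, Z_glob as above satisfies: there exists a unitary V ∈ {U_x, U_z, U_{xz}} such that V|Ψ⟩ is a T-eigenvector with eigenvalue equal to minus the T-eigenvalue of |Ψ⟩; in particular ⟨Ψ|V|Ψ⟩ = 0. -/

import Mathlib

open Matrix Complex

/-- The cyclic coordinate shift: `(shiftIdx L q g) i = g (i+1 mod L)`. -/
def shiftIdx (L q : ℕ) (g : Fin L → Fin q) : Fin L → Fin q :=
  fun i => g ⟨(i.val + 1) % L, Nat.mod_lt _ (Nat.lt_of_le_of_lt (Nat.zero_le _) i.isLt)⟩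

/-- The translation (cyclic shift) unitary on `(ℂ^q)^{⊗L}`, acting on basis vectors by
`|a_1 ... a_L⟩ ↦ |a_L a_1 ... a_{L-1}⟩`. -/
noncomputable def Tshift (L q : ℕ) : Matrix (Fin L → Fin q) (Fin L → Fin q) ℂ :=
  Matrix.of fun f g => if shiftIdx L q f = g then 1 else 0

/-- The tensor product operator `A_1 ⊗ ... ⊗ A_L` acting as `A i` on the i-th factor. -/
noncomputable def tens (L q : ℕ) (A : Fin L → Matrix (Fin q) (Fin q) ℂ) :
    Matrix (Fin L → Fin q) (Fin L → Fin q) ℂ :=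
  Matrix.of fun f g => ∏ i, A i (f i) (g i)

/-- Pauli X. -/
noncomputable def σx : Matrix (Fin 2) (Fin 2) ℂ := !![0, 1; 1, 0]

/-- Pauli Z. -/
noncomputable def σz : Matrix (Fin 2) (Fin 2) ℂ := !![1, 0; 0, -1]

/-- `U_x = (1 ⊗ σ_x)^{⊗N}` on `N` two-qubit unit cells (σ_x on odd qubit sites). -/
noncomputable def Ux (N : ℕ) := tens (2 * N) 2 fun i => if i.val % 2 = 1 then σx else 1

/-- `U_z = (1 ⊗ σ_z)^{⊗N}`. -/
noncomputable def Uz (N : ℕ) := tens (2 * N) 2 fun i => if i.val % 2 = 1 then σz else 1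

/-- `U_{xz} = (σ_x ⊗ σ_z)^{⊗N}`. -/
noncomputable def Uxz (N : ℕ) := tens (2 * N) 2 fun i => if i.val % 2 = 0 then σx else σz

/-- Global ℤ_2 symmetry `X_glob = σ_x^{⊗2N}`. -/
noncomputable def Xglob (N : ℕ) := tens (2 * N) 2 fun _ => σx

/-- Global ℤ_2 symmetry `Z_glob = σ_z^{⊗2N}`. -/
noncomputable def Zglob (N : ℕ) := tens (2 * N) 2 fun _ => σz

/-! Translating by one site exchanges the two sublattices, so `T V = V G T` with `G` equal to
`X_glob`, `Z_glob` and `(-1)^N X_glob Z_glob` for `V = U_x, U_z, U_{xz}`; the sign `(-1)^N`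
comes from `σ_z σ_x σ_z = -σ_x` on the `N` odd sites. Hence `V Ψ` is a `T`-eigenvector with
eigenvalue `λ` times `(-1)^{Q_x}`, `(-1)^{Q_z}`, `(-1)^{N+Q_x+Q_z}` respectively. The product of
these three signs is `(-1)^N = -1`, so one of them is `-1`. Eigenvectors of the unitary `T` for
`λ` and `-λ` are orthogonal, since `conj λ · (-λ) = -|λ|² ≠ 1`. -/

theorem star_dotProduct_eq_zero_of_mem_unitaryGroup {n K : Type*} [Fintype n] [DecidableEq n]
    [Field K] [StarRing K] {U : Matrix n n K} (hU : U ∈ unitaryGroup n K) {x y : n → K}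
    {μ ν : K} (hx : U *ᵥ x = μ • x) (hy : U *ᵥ y = ν • y) (hμν : star μ * ν ≠ 1) :
    star x ⬝ᵥ y = 0 := by
  have hpres : star (U *ᵥ x) ⬝ᵥ (U *ᵥ y) = star x ⬝ᵥ y := by
    rw [star_mulVec, dotProduct_mulVec, vecMul_vecMul, ← star_eq_conjTranspose,
      (mem_unitaryGroup_iff').mp hU, vecMul_one]
  rw [hx, hy, star_smul, smul_dotProduct, dotProduct_smul, smul_smul, smul_eq_mul] at hpres
  have hfactor : (star μ * ν - 1) * (star x ⬝ᵥ y) = 0 := by linear_combination hpres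
  exact (mul_eq_zero.mp hfactor).resolve_left (sub_ne_zero.mpr hμν)

theorem permMatrix_mem_unitaryGroup {n K : Type*} [Fintype n] [DecidableEq n] [CommRing K]
    [StarRing K] (σ : Equiv.Perm n) : σ.permMatrix K ∈ unitaryGroup n K := by
  rw [mem_unitaryGroup_iff', star_eq_conjTranspose, conjTranspose_permMatrix, ← permMatrix_mul,
    mul_inv_cancel, permMatrix_one]

theorem mulVec_mulVec_eq_smul_of_mul_eq {n R : Type*} [Fintype n] [CommSemiring R]
    {T V G : Matrix n n R} (hTV : T * V = V * G * T) {Ψ : n → R} {lam ε : R}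
    (hT : T *ᵥ Ψ = lam • Ψ) (hG : G *ᵥ Ψ = ε • Ψ) :
    T *ᵥ (V *ᵥ Ψ) = (ε * lam) • (V *ᵥ Ψ) := by
  rw [mulVec_mulVec, hTV, ← mulVec_mulVec, ← mulVec_mulVec, hT, mulVec_smul, hG, mulVec_smul,
    mulVec_smul, smul_smul, mul_comm]

theorem neg_one_zpow_eq_neg_one_or_of_odd {R : Type*} [DivisionRing R] {N : ℕ} (hN : Odd N)
    (a b : ℤ) :
    (-1 : R) ^ a = -1 ∨ (-1 : R) ^ b = -1 ∨ (-1 : R) ^ N * ((-1) ^ a * (-1) ^ b) = -1 := by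
  rcases Int.even_or_odd a with ha | ha <;> rcases Int.even_or_odd b with hb | hb <;>
    simp [ha.neg_one_zpow, hb.neg_one_zpow, hN.neg_one_pow]

theorem star_mul_neg_self_ne_one (z : ℂ) : star z * -z ≠ 1 := by
  rw [mul_neg, star_def, conj_mul', ← ofReal_pow, ← ofReal_neg, ← ofReal_one, Ne, ofReal_inj]
  intro h
  linarith [sq_nonneg ‖z‖]

theorem prod_fin_two_mul_ite_odd {M : Type*} [CommMonoid M] (N : ℕ) (c : M) :
    ∏ i : Fin (2 * N), (if i.val % 2 = 1 then c else 1) = c ^ N := by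
  rw [Fin.prod_univ_eq_prod_range (fun n => if n % 2 = 1 then c else 1)]
  induction N with
  | zero => simp
  | succ n ih =>
    rw [Nat.mul_succ, Finset.prod_range_succ, Finset.prod_range_succ, ih, pow_succ]
    simp [Nat.add_mod]

theorem val_finRotate (L : ℕ) (i : Fin L) : (finRotate L i).val = (i.val + 1) % L := by
  obtain _ | L := L
  · exact i.elim0
  · rw [finRotate_apply, Fin.val_add, Fin.val_one', Nat.add_mod_mod]

theorem val_finRotate_mod_two (N : ℕ) (i : Fin (2 * N)) :
    (finRotate (2 * N) i).val % 2 = (i.val + 1) % 2 := by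
  rw [val_finRotate, Nat.mod_mod_of_dvd _ (dvd_mul_right 2 N)]

theorem shiftIdx_eq_comp (L q : ℕ) (g : Fin L → Fin q) : shiftIdx L q g = g ∘ finRotate L := by
  funext i
  exact congrArg g (Fin.ext (val_finRotate L i).symm)

theorem Tshift_eq_permMatrix (L q : ℕ) :
    Tshift L q = Equiv.Perm.permMatrix ℂ ((finRotate L).symm.arrowCongr (Equiv.refl (Fin q))) := by
  ext f g
  simp only [Tshift, shiftIdx_eq_comp, eq_comm, of_apply, PEquiv.toMatrix_apply,
    Equiv.toPEquiv_apply, Option.mem_def, Option.some.injEq]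
  rfl

theorem Tshift_mem_unitaryGroup (L q : ℕ) : Tshift L q ∈ unitaryGroup (Fin L → Fin q) ℂ :=
  Tshift_eq_permMatrix L q ▸ permMatrix_mem_unitaryGroup _

theorem Tshift_mul_tens (L q : ℕ) (A : Fin L → Matrix (Fin q) (Fin q) ℂ) :
    Tshift L q * tens L q A = tens L q (fun i => A ((finRotate L).symm i)) * Tshift L q := by
  rw [Tshift_eq_permMatrix, PEquiv.toMatrix_toPEquiv_mul, PEquiv.mul_toMatrix_toPEquiv]
  ext f g
  simp only [tens, submatrix_apply, of_apply]
  refine Fintype.prod_equiv (finRotate L) _ _ fun i => ?_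
  simp only [Equiv.arrowCongr_apply, Equiv.arrowCongr_symm, Equiv.symm_symm, Equiv.refl_symm,
    Equiv.coe_refl, Function.comp_apply, Equiv.symm_apply_apply, id]

theorem Tshift_mul_tens_alternating (N q : ℕ) (E O : Matrix (Fin q) (Fin q) ℂ) :
    Tshift (2 * N) q * tens (2 * N) q (fun i => if i.val % 2 = 1 then O else E) =
      tens (2 * N) q (fun i => if i.val % 2 = 1 then E else O) * Tshift (2 * N) q := by
  rw [Tshift_mul_tens]
  congr 2
  funext i
  obtain ⟨j, rfl⟩ := (finRotate (2 * N)).surjective i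
  simp only [Equiv.symm_apply_apply, val_finRotate_mod_two]
  rcases Nat.mod_two_eq_zero_or_one j with h | h <;> simp [h, Nat.add_mod]

theorem tens_mul_tens (L q : ℕ) (A B : Fin L → Matrix (Fin q) (Fin q) ℂ) :
    tens L q A * tens L q B = tens L q (A * B) := by
  ext f g
  simp only [tens, mul_apply, of_apply, Pi.mul_apply, Finset.prod_univ_sum, Fintype.piFinset_univ,
    Finset.prod_mul_distrib]

theorem tens_smul (L q : ℕ) (c : Fin L → ℂ) (A : Fin L → Matrix (Fin q) (Fin q) ℂ) :
    tens L q (fun i => c i • A i) = (∏ i, c i) • tens L q A := by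
  ext f g
  simp [tens, Finset.prod_mul_distrib]

theorem σx_mul_self : σx * σx = 1 := by
  ext i j; fin_cases i <;> fin_cases j <;> simp [σx]

theorem σz_mul_self : σz * σz = 1 := by
  ext i j; fin_cases i <;> fin_cases j <;> simp [σz]

theorem σz_mul_σx : σz * σx = -(σx * σz) := by
  ext i j; fin_cases i <;> fin_cases j <;> simp [σx, σz]

theorem Tshift_mul_Ux (N : ℕ) : Tshift (2 * N) 2 * Ux N = Ux N * Xglob N * Tshift (2 * N) 2 := by
  rw [Ux, Xglob, Tshift_mul_tens_alternating, tens_mul_tens]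
  congr 2
  funext i
  rcases Nat.mod_two_eq_zero_or_one i with h | h <;> simp [h, σx_mul_self]

theorem Tshift_mul_Uz (N : ℕ) : Tshift (2 * N) 2 * Uz N = Uz N * Zglob N * Tshift (2 * N) 2 := by
  rw [Uz, Zglob, Tshift_mul_tens_alternating, tens_mul_tens]
  congr 2
  funext i
  rcases Nat.mod_two_eq_zero_or_one i with h | h <;> simp [h, σz_mul_self]

theorem Tshift_mul_Uxz (N : ℕ) :
    Tshift (2 * N) 2 * Uxz N = Uxz N * ((-1 : ℂ) ^ N • (Xglob N * Zglob N)) * Tshift (2 * N) 2 := by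
  have hUxz : Uxz N = tens (2 * N) 2 fun i => if i.val % 2 = 1 then σz else σx := by
    rw [Uxz]
    congr 1
    funext i
    rcases Nat.mod_two_eq_zero_or_one i with h | h <;> simp [h]
  have hsign : Uxz N * (Xglob N * Zglob N) =
      (-1 : ℂ) ^ N • tens (2 * N) 2 fun i => if i.val % 2 = 1 then σx else σz := by
    rw [hUxz, Xglob, Zglob, tens_mul_tens, tens_mul_tens, ← prod_fin_two_mul_ite_odd, ← tens_smul]
    congr 1
    funext i
    rcases Nat.mod_two_eq_zero_or_one i with h | h
    · simp [h, ← mul_assoc, σx_mul_self]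
    · simp [h, ← mul_assoc, σz_mul_σx, mul_assoc σx, σz_mul_self]
  rw [mul_smul_comm, hsign, smul_smul, ← mul_pow, neg_one_mul, neg_neg, one_pow, one_smul, hUxz,
    Tshift_mul_tens_alternating]

theorem Z2Z2_LSM_general (N : ℕ) (hN : Odd N) (Qx Qz : ℤ) (lam : ℂ)
    (Ψ : (Fin (2 * N) → Fin 2) → ℂ)
    (heigT : (Tshift (2 * N) 2).mulVec Ψ = lam • Ψ)
    (heigX : (Xglob N).mulVec Ψ = ((-1 : ℂ) ^ Qx) • Ψ)
    (heigZ : (Zglob N).mulVec Ψ = ((-1 : ℂ) ^ Qz) • Ψ) :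
    ∃ V : Matrix (Fin (2 * N) → Fin 2) (Fin (2 * N) → Fin 2) ℂ,
      (V = Ux N ∨ V = Uz N ∨ V = Uxz N) ∧
      (Tshift (2 * N) 2).mulVec (V.mulVec Ψ) = (-lam) • V.mulVec Ψ ∧
      ∑ f, (starRingEnd ℂ) (Ψ f) * (V.mulVec Ψ) f = 0 := by
  have orth : ∀ {Φ}, Tshift (2 * N) 2 *ᵥ Φ = (-lam) • Φ → star Ψ ⬝ᵥ Φ = 0 := fun hΦ =>
    star_dotProduct_eq_zero_of_mem_unitaryGroup (Tshift_mem_unitaryGroup _ _) heigT hΦ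
      (star_mul_neg_self_ne_one lam)
  have heigXZ : ((-1 : ℂ) ^ N • (Xglob N * Zglob N)) *ᵥ Ψ =
      ((-1 : ℂ) ^ N * ((-1 : ℂ) ^ Qx * (-1 : ℂ) ^ Qz)) • Ψ := by
    rw [smul_mulVec, ← mulVec_mulVec, heigZ, mulVec_smul, heigX, smul_smul, smul_smul,
      mul_assoc, mul_comm ((-1 : ℂ) ^ Qz)]
  rcases neg_one_zpow_eq_neg_one_or_of_odd (R := ℂ) hN Qx Qz with h | h | h
  · have hUx := mulVec_mulVec_eq_smul_of_mul_eq (Tshift_mul_Ux N) heigT heigX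
    rw [h, neg_one_mul] at hUx
    exact ⟨Ux N, Or.inl rfl, hUx, orth hUx⟩
  · have hUz := mulVec_mulVec_eq_smul_of_mul_eq (Tshift_mul_Uz N) heigT heigZ
    rw [h, neg_one_mul] at hUz
    exact ⟨Uz N, Or.inr (Or.inl rfl), hUz, orth hUz⟩
  · have hUxz := mulVec_mulVec_eq_smul_of_mul_eq (Tshift_mul_Uxz N) heigT heigXZ
    rw [h, neg_one_mul] at hUxz
    exact ⟨Uxz N, Or.inr (Or.inr rfl), hUxz, orth hUxz⟩

/-- projective ℤ_2×ℤ_2 LSM. For odd `N`, some twist unitary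
`V ∈ {U_x, U_z, U_{xz}}` boosts the momentum of any simultaneous eigenvector `Ψ` by π:
`V Ψ` is a `T`-eigenvector with eigenvalue `-λ`, and `⟨Ψ, V Ψ⟩ = 0`. -/
theorem Z2Z2_LSM (N : ℕ) (hN : Odd N) (Qx Qz : ℤ) (lam : ℂ)
    (Ψ : (Fin (2 * N) → Fin 2) → ℂ) (hΨ : Ψ ≠ 0)
    (heigT : (Tshift (2 * N) 2).mulVec Ψ = lam • Ψ)
    (heigX : (Xglob N).mulVec Ψ = ((-1 : ℂ) ^ Qx) • Ψ)
    (heigZ : (Zglob N).mulVec Ψ = ((-1 : ℂ) ^ Qz) • Ψ) :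
    ∃ V : Matrix (Fin (2 * N) → Fin 2) (Fin (2 * N) → Fin 2) ℂ,
      (V = Ux N ∨ V = Uz N ∨ V = Uxz N) ∧
      (Tshift (2 * N) 2).mulVec (V.mulVec Ψ) = (-lam) • V.mulVec Ψ ∧
      ∑ f, (starRingEnd ℂ) (Ψ f) * (V.mulVec Ψ) f = 0 :=
  Z2Z2_LSM_general N hN Qx Qz lam Ψ heigT heigX heigZ
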